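/- Let M and N be left A-modules with flat connections ∇_M (with ∇_M(m) = Σ m_A ⊗ m_M) and ∇_N (with ∇_N(n) = Σ n_A ⊗ n_N) with respect to the universal differential calculus. Define c̃_{M,N}: M⊗N → N⊗M by c̃_{M,N}(m⊗n) = n⊗m − Σ m_A n ⊗ m_M, and c̃_{N,M}: N⊗M → M⊗N by c̃_{N,M}(n⊗m) = m⊗n − Σ n_A m ⊗ n_N. Then c̃_{N,M}∘c̃_{M,N} is the identity up to balanced relations: for all m ∈ M, n ∈ N, the element c̃_{N,M}(c̃_{M,N}(m⊗n)) − m⊗n lies in the K-linear span of {(x b)⊗y − x⊗(b y) : x ∈ M, b ∈ A, y ∈ N} inside M⊗N (where x b is the induced right action x·b := b x − Σ x_A b x_M on M and b y the left action on N). -/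

import Mathlib

/-!
Write `∇m = Σ m_A ⊗ m_M` and `∇n = Σ n_A ⊗ n_N`. The Leibniz rule for `∇_N` gives
`c̃_{N,M}(a n ⊗ x) = a x ⊗ n - Σ (a n_A) x ⊗ n_N`, so, as `Σ m_A m_M = 0`,
`c̃_{N,M}(c̃_{M,N}(m ⊗ n)) = m ⊗ n - Σ (n_A m - Σ m_A n_A m_M) ⊗ n_N = m ⊗ n - Σ m·n_A ⊗ n_N`.
Since also `Σ n_A n_N = 0`, the defect is `-Σ (m·n_A ⊗ n_N - m ⊗ n_A n_N)`, a sum of balanced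
relations.
-/

open TensorProduct

variable (K A M : Type*) [Field K] [Ring A] [Algebra K A]
  [AddCommGroup M] [Module K M] [Module A M] [IsScalarTower K A M]

/-- The action map `A ⊗ M → M`, `a ⊗ m ↦ a • m`. -/
noncomputable def actMap : A ⊗[K] M →ₗ[K] M :=
  TensorProduct.lift (LinearMap.mk₂ K (fun a m => a • m)
    (fun a b m => add_smul a b m)
    (fun k a m => smul_assoc k a m)
    (fun a m n => smul_add a m n)
    (fun k a m => (smul_comm k a m).symm))

/-- Left multiplication by `a : A` on a left `A`-module, as a `K`-linear map. -/
def lsmulMap (a : A) : M →ₗ[K] M where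
  toFun := fun m => a • m
  map_add' := fun x y => smul_add a x y
  map_smul' := fun k m => (smul_comm k a m).symm

/-- `a ↦ a • n` as a `K`-linear map `A → M`. -/
def smulBy (n : M) : A →ₗ[K] M where
  toFun := fun a => a • n
  map_add' := fun a b => add_smul a b n
  map_smul' := fun k a => smul_assoc k a n

/-- `D : M → A ⊗ M` is a connection with respect to the universal differential
calculus. -/
def IsConnection (D : M →ₗ[K] A ⊗[K] M) : Prop :=
  (∀ m : M, actMap K A M (D m) = 0) ∧
  ∀ (a : A) (m : M),
    D (a • m) = LinearMap.rTensor M (LinearMap.mulLeft K a) (D m)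
      + (1 : A) ⊗ₜ[K] (a • m) - a ⊗ₜ[K] m

/-- Flatness of a connection: `Σ 1 ⊗ m_A ⊗ m_M = Σ m_A ⊗ D(m_M)`. -/
def IsFlatConnection (D : M →ₗ[K] A ⊗[K] M) : Prop :=
  ∀ m : M, (1 : A) ⊗ₜ[K] (D m) = LinearMap.lTensor A D (D m)

/-- The induced right operation `m·a := a m − Σ m_A a m_M`. -/
noncomputable def rop (D : M →ₗ[K] A ⊗[K] M) (m : M) (a : A) : M :=
  a • m - actMap K A M (LinearMap.rTensor M (LinearMap.mulRight K a) (D m))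

variable (N : Type*) [AddCommGroup N] [Module K N] [Module A N] [IsScalarTower K A N]

/-- The map `N ⊗ A → N`, `n ⊗ a ↦ a • n`. -/
noncomputable def ract : N ⊗[K] A →ₗ[K] N :=
  TensorProduct.lift (LinearMap.mk₂ K (fun n a => a • n)
    (fun n₁ n₂ a => smul_add a n₁ n₂)
    (fun k n a => (smul_comm k a n).symm)
    (fun n a b => add_smul a b n)
    (fun k n a => smul_assoc k a n))

/-- The map `c̃ : M ⊗ N → N ⊗ M`, `m ⊗ n ↦ n ⊗ m − Σ (m_A • n) ⊗ m_M`, associated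
with a connection `D` on `M`. -/
noncomputable def ctMap (D : M →ₗ[K] A ⊗[K] M) : M ⊗[K] N →ₗ[K] N ⊗[K] M :=
  (LinearMap.id - (LinearMap.rTensor M (ract K A N)).comp
      (((TensorProduct.assoc K N A M).symm.toLinearMap).comp
        (LinearMap.lTensor N D))).comp
    (TensorProduct.comm K M N).toLinearMap

section

variable {K A M N}

@[simp]
theorem actMap_tmul (a : A) (m : M) : actMap K A M (a ⊗ₜ[K] m) = a • m := rfl

@[simp]
theorem ract_tmul (n : N) (a : A) : ract K A N (n ⊗ₜ[K] a) = a • n := rfl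

@[simp]
theorem smulBy_apply (m : M) (a : A) : smulBy K A M m a = a • m := rfl

omit [Module A M] [IsScalarTower K A M] in
theorem ctMap_tmul (D : M →ₗ[K] A ⊗[K] M) (m : M) (n : N) :
    ctMap K A M N D (m ⊗ₜ[K] n) = n ⊗ₜ[K] m - (smulBy K A N n).rTensor M (D m) := by
  simp only [ctMap, LinearMap.comp_apply, LinearEquiv.coe_coe, comm_tmul, LinearMap.sub_apply,
    LinearMap.id_apply, LinearMap.lTensor_tmul, sub_right_inj]
  induction D m using TensorProduct.induction_on with
  | zero => simp
  | tmul a x => simp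
  | add s t hs ht => simp only [tmul_add, map_add, hs, ht]

/-- `t ↦ (b ↦ Σ t_A b t_M)` for `t = Σ t_A ⊗ t_M`. -/
noncomputable def actRight : A ⊗[K] M →ₗ[K] A →ₗ[K] M where
  toFun t :=
    { toFun b := actMap K A M ((LinearMap.mulRight K b).rTensor M t)
      map_add' b c := by
        rw [← map_add, ← LinearMap.add_apply, ← LinearMap.rTensor_add]
        congr 3
        ext
        exact mul_add _ _ _
      map_smul' k b := by
        rw [RingHom.id_apply, ← map_smul, ← LinearMap.smul_apply, ← LinearMap.rTensor_smul]
        congr 3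
        ext
        exact mul_smul_comm _ _ _ }
  map_add' s t := by
    ext b
    simp
  map_smul' k t := by
    ext b
    simp

theorem actRight_tmul (a : A) (x : M) :
    actRight (a ⊗ₜ[K] x) = (smulBy K A M x).comp (LinearMap.mulLeft K a) := by
  ext b
  simp [actRight]

noncomputable def ropLin (D : M →ₗ[K] A ⊗[K] M) (x : M) : A →ₗ[K] M :=
  smulBy K A M x - actRight (D x)

theorem ctMap_smul_tmul {D : M →ₗ[K] A ⊗[K] M} (hD : IsConnection K A M D)
    (a : A) (m : M) (y : N) :
    ctMap K A M N D ((a • m) ⊗ₜ[K] y)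
      = (a • y) ⊗ₜ[K] m - (actRight (a ⊗ₜ[K] y)).rTensor M (D m) := by
  rw [ctMap_tmul, hD.2, map_sub, map_add, ← LinearMap.comp_apply, ← LinearMap.rTensor_comp,
    ← actRight_tmul]
  simp only [LinearMap.rTensor_tmul, smulBy_apply, one_smul]
  abel

theorem ctMap_rTensor_smulBy {D : M →ₗ[K] A ⊗[K] M} (hD : IsConnection K A M D)
    (m : M) (t : A ⊗[K] N) :
    ctMap K A M N D ((smulBy K A M m).rTensor N t)
      = actMap K A N t ⊗ₜ[K] m - (actRight t).rTensor M (D m) := by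
  induction t using TensorProduct.induction_on with
  | zero => simp
  | tmul a y => simp only [LinearMap.rTensor_tmul, smulBy_apply, actMap_tmul, ctMap_smul_tmul hD]
  | add s t hs ht =>
    rw [map_add, map_add, hs, ht, map_add, add_tmul, map_add, LinearMap.rTensor_add,
      LinearMap.add_apply]
    abel

def balancedSpan (D : M →ₗ[K] A ⊗[K] M) : Submodule K (M ⊗[K] N) :=
  Submodule.span K
    {z : M ⊗[K] N | ∃ (x : M) (b : A) (y : N), z = (rop K A M D x b) ⊗ₜ[K] y - x ⊗ₜ[K] (b • y)}

theorem rTensor_ropLin_sub_tmul_actMap_mem_balancedSpan (D : M →ₗ[K] A ⊗[K] M) (x : M)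
    (t : A ⊗[K] N) :
    (ropLin D x).rTensor N t - x ⊗ₜ[K] actMap K A N t ∈ balancedSpan D := by
  induction t using TensorProduct.induction_on with
  | zero => simp
  | tmul b y => exact Submodule.subset_span ⟨x, b, y, rfl⟩
  | add s t hs ht =>
    rw [map_add, map_add, tmul_add, add_sub_add_comm]
    exact add_mem hs ht

theorem ctMap_comp_ctMap_tmul {DM : M →ₗ[K] A ⊗[K] M} {DN : N →ₗ[K] A ⊗[K] N} {m : M}
    (hm : actMap K A M (DM m) = 0) (hDN : IsConnection K A N DN) (n : N) :
    ctMap K A N M DN (ctMap K A M N DM (m ⊗ₜ[K] n))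
      = m ⊗ₜ[K] n - (ropLin DM m).rTensor N (DN n) := by
  rw [ctMap_tmul, map_sub, ctMap_tmul, ctMap_rTensor_smulBy hDN, hm, zero_tmul, ropLin,
    LinearMap.rTensor_sub, LinearMap.sub_apply]
  abel

end

theorem ctMap_comp_ctMap_eq_id_up_to_balanced
    (DM : M →ₗ[K] A ⊗[K] M) (hconnM : IsConnection K A M DM)
    (DN : N →ₗ[K] A ⊗[K] N) (hconnN : IsConnection K A N DN)
    (m : M) (n : N) :
    ctMap K A N M DN (ctMap K A M N DM (m ⊗ₜ[K] n)) - m ⊗ₜ[K] n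
      ∈ Submodule.span K
          {z : M ⊗[K] N | ∃ (x : M) (b : A) (y : N),
            z = (rop K A M DM x b) ⊗ₜ[K] y - x ⊗ₜ[K] (b • y)} := by
  have hbalanced := rTensor_ropLin_sub_tmul_actMap_mem_balancedSpan DM m (DN n)
  rw [hconnN.1 n, tmul_zero, sub_zero] at hbalanced
  rw [ctMap_comp_ctMap_tmul (hconnM.1 m) hconnN, sub_sub_cancel_left]
  exact neg_mem hbalanced
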